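/- arXiv:1811.12407 — 4 statements merged into one kernel-verified Lean document; each statement's English description precedes it below -/
import Mathlib

section
/- Suppose E is spectral. Then E contains either only one context or uncountably many contexts: if E has two distinct contexts, then the set of all contexts of E is uncountable. -/
variable {V : Type*} [AddCommGroup V] [Module ℝ V]

/-- `P` is a pointed convex cone: closed under addition, nonnegative scalar
multiplication, and `P ∩ (-P) = {0}`. -/
def IsCone (P : Set V) : Prop :=
  (∀ x ∈ P, ∀ y ∈ P, x + y ∈ P) ∧
  (∀ c : ℝ, 0 ≤ c → ∀ x ∈ P, c • x ∈ P) ∧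
  (∀ x ∈ P, -x ∈ P → x = 0)

/-- The order induced by the cone `P`: `v ≤ w` iff `w - v ∈ P`. -/
def leC (P : Set V) (v w : V) : Prop := w - v ∈ P

/-- The linear effect algebra `E = [0, u]`. -/
def Eff (P : Set V) (u : V) : Set V := {v | leC P 0 v ∧ leC P v u}

/-- `f` is a sharp element of `[0, u]`. -/
def Sharp (P : Set V) (u f : V) : Prop :=
  f ∈ Eff P u ∧ ∀ g ∈ Eff P u, leC P g f → leC P g (u - f) → g = 0

/-- `f` is a one-dimensional element of `[0, u]`. -/
def OneDim (P : Set V) (u f : V) : Prop :=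
  f ∈ Eff P u ∧ f ≠ 0 ∧ ∀ g ∈ Eff P u, leC P g f → ∃ t : ℝ, 0 ≤ t ∧ t ≤ 1 ∧ g = t • f

/-- The set of sharp one-dimensional elements of `[0, u]`. -/
def S1 (P : Set V) (u : V) : Set V := {f | Sharp P u f ∧ OneDim P u f}

/-- A context: a finite family of sharp one-dimensional elements summing to `u`. -/
def IsContext (P : Set V) (u : V) {n : ℕ} (a : Fin n → V) : Prop :=
  (∀ i, a i ∈ S1 P u) ∧ ∑ i, a i = u

/-- The effect algebra `[0, u]` is spectral. -/
def Spectral (P : Set V) (u : V) : Prop :=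
  ∀ f ∈ Eff P u, ∃ (n : ℕ) (a : Fin n → V) (μ : Fin n → ℝ),
    IsContext P u a ∧ (∀ i, 0 ≤ μ i ∧ μ i ≤ 1) ∧ f = ∑ i, μ i • a i

/-- A state on `[0, u]`: a positive linear functional with `s u = 1`. -/
def IsState (P : Set V) (u : V) (s : V →ₗ[ℝ] ℝ) : Prop :=
  (∀ p ∈ P, 0 ≤ s p) ∧ s u = 1

/-- A context given as a finite set of sharp one-dimensional elements summing to `u`. -/
def IsContextF (P : Set V) (u : V) (A : Finset V) : Prop :=
  (∀ a ∈ A, a ∈ S1 P u) ∧ ∑ a ∈ A, a = u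

/-! ### Auxiliary lemmas -/

lemma eff_memP {P : Set V} {u f : V} (hf : f ∈ Eff P u) : f ∈ P := by
  have h := hf.1
  simpa [leC] using h

lemma cone_zero {P : Set V} (hP : IsCone P) {u : V} (hu : u ∈ P) : (0 : V) ∈ P := by
  simpa using hP.2.1 0 le_rfl u hu

lemma cone_sum_mem {P : Set V} (hP : IsCone P) (h0 : (0:V) ∈ P) {ι : Type*} (s : Finset ι)
    (f : ι → V) (hf : ∀ i ∈ s, f i ∈ P) : (∑ i ∈ s, f i) ∈ P := by
  classical
  induction s using Finset.cons_induction with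
  | empty => simpa using h0
  | cons a s ha ih =>
    rw [Finset.sum_cons]
    exact hP.1 _ (hf a (Finset.mem_cons_self a s)) _
      (ih fun i hi => hf i (Finset.mem_cons.2 (Or.inr hi)))

lemma cone_sum_eq_zero {P : Set V} (hP : IsCone P) (h0 : (0:V) ∈ P) {ι : Type*} (s : Finset ι)
    (f : ι → V) (hf : ∀ i ∈ s, f i ∈ P) (hsum : ∑ i ∈ s, f i = 0) :
    ∀ i ∈ s, f i = 0 := by
  classical
  induction s using Finset.cons_induction with
  | empty => simp
  | cons a s ha ih =>
    rw [Finset.sum_cons] at hsum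
    have hrest : ∑ i ∈ s, f i ∈ P :=
      cone_sum_mem hP h0 s f fun i hi => hf i (Finset.mem_cons.2 (Or.inr hi))
    have h1 : ∑ i ∈ s, f i = -f a := eq_neg_of_add_eq_zero_right hsum
    have hfa : f a = 0 := hP.2.2 _ (hf a (Finset.mem_cons_self a s)) (h1 ▸ hrest)
    have hsum' : ∑ i ∈ s, f i = 0 := by rw [hfa] at hsum; simpa using hsum
    intro i hi
    rcases Finset.mem_cons.1 hi with rfl | hi'
    · exact hfa
    · exact ih (fun j hj => hf j (Finset.mem_cons.2 (Or.inr hj))) hsum' i hi'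

lemma state_le_one {P : Set V} {u : V} {s : V →ₗ[ℝ] ℝ} (hs : IsState P u s)
    {f : V} (hf : f ∈ Eff P u) : s f ≤ 1 := by
  have h : (0:ℝ) ≤ s (u - f) := hs.1 _ hf.2
  rw [map_sub, hs.2] at h; linarith

/-- The coefficient of `c` in any representation of `f` over the context `C` equals
`s f` for any state `s` with `s c = 1`. -/
lemma coeff_eq {P : Set V} {u : V} {C : Finset V} (hC : IsContextF P u C)
    {c : V} (hc : c ∈ C) {s : V →ₗ[ℝ] ℝ} (hs : IsState P u s) (hsc : s c = 1)
    {ν : V → ℝ} {f : V} (hf : f = ∑ x ∈ C, ν x • x) : s f = ν c := by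
  classical
  have hnn : ∀ x ∈ C, 0 ≤ s x := fun x hx => hs.1 x (eff_memP (hC.1 x hx).1.1)
  have hsum : ∑ x ∈ C, s x = 1 := by rw [← map_sum, hC.2, hs.2]
  have herase : ∑ x ∈ C.erase c, s x = 0 := by
    have h : s c + ∑ x ∈ C.erase c, s x = ∑ x ∈ C, s x :=
      Finset.add_sum_erase C (fun x => s x) hc
    rw [hsum, hsc] at h; linarith
  have hzero : ∀ x ∈ C.erase c, s x = 0 := fun x hx =>
    (Finset.sum_eq_zero_iff_of_nonneg
      (fun y hy => hnn y (Finset.mem_of_mem_erase hy))).1 herase x hx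
  rw [hf, map_sum]
  have h1 : ∑ x ∈ C, s (ν x • x) = s (ν c • c) :=
    Finset.sum_eq_single c
      (fun x hx hne => by
        rw [map_smul, smul_eq_mul, hzero x (Finset.mem_erase.2 ⟨hne, hx⟩), mul_zero])
      (fun h => absurd hc h)
  rw [h1, map_smul, smul_eq_mul, hsc, mul_one]

/-- A sharp one-dimensional element represented with nonnegative coefficients over a
context must belong to that context. -/
lemma atom_mem {P : Set V} {u : V} (hP : IsCone P) (h0 : (0:V) ∈ P) {C : Finset V}
    (hC : IsContextF P u C) {a : V} (ha : a ∈ S1 P u) {α : V → ℝ}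
    (hα : ∀ x ∈ C, 0 ≤ α x) (hrep : a = ∑ x ∈ C, α x • x) : a ∈ C := by
  classical
  have haEff : a ∈ Eff P u := ha.1.1
  have haneq : a ≠ 0 := ha.2.2.1
  obtain ⟨x₀, hx₀C, hx₀ne⟩ : ∃ x ∈ C, α x • x ≠ 0 := by
    by_contra h; push_neg at h
    exact haneq (by rw [hrep]; exact Finset.sum_eq_zero h)
  have hx₀S1 : x₀ ∈ S1 P u := hC.1 x₀ hx₀C
  have hx₀Eff : x₀ ∈ Eff P u := hx₀S1.1.1
  have hx₀nz : x₀ ≠ 0 := hx₀S1.2.2.1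
  have hαpos : 0 < α x₀ := by
    rcases (hα x₀ hx₀C).lt_or_eq with h | h
    · exact h
    · exact absurd (by rw [← h, zero_smul]) hx₀ne
  have hmemP : ∀ x ∈ C, x ∈ P := fun x hx => eff_memP (hC.1 x hx).1.1
  have hle : a - α x₀ • x₀ ∈ P := by
    have hsplit : a - α x₀ • x₀ = ∑ x ∈ C.erase x₀, α x • x := by
      rw [hrep, ← Finset.add_sum_erase C (fun x => α x • x) hx₀C]; abel
    rw [hsplit]
    exact cone_sum_mem hP h0 _ _ fun x hx =>
      hP.2.1 _ (hα x (Finset.mem_of_mem_erase hx)) _ (hmemP x (Finset.mem_of_mem_erase hx))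
  have hgEff : α x₀ • x₀ ∈ Eff P u := by
    constructor
    · show α x₀ • x₀ - 0 ∈ P
      rw [sub_zero]; exact hP.2.1 _ hαpos.le _ (hmemP _ hx₀C)
    · show u - α x₀ • x₀ ∈ P
      have h2 : u - α x₀ • x₀ = (u - a) + (a - α x₀ • x₀) := by abel
      rw [h2]; exact hP.1 _ haEff.2 _ hle
  obtain ⟨t, ht0, ht1, htg⟩ := ha.2.2.2 _ hgEff (show leC P _ a from hle)
  have htne : t ≠ 0 := by
    intro h; rw [h, zero_smul] at htg; exact hx₀ne htg
  have htpos : 0 < t := lt_of_le_of_ne ht0 (Ne.symm htne)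
  set r := t / α x₀ with hrdef
  have hrpos : 0 < r := div_pos htpos hαpos
  have hx₀r : x₀ = r • a := by
    have h := congrArg (fun v => (α x₀)⁻¹ • v) htg
    simp only [smul_smul] at h
    rw [inv_mul_cancel₀ (ne_of_gt hαpos), one_smul] at h
    rw [h, hrdef, div_eq_inv_mul]
  have huP : u - a ∈ P := haEff.2
  have hux₀ : u - x₀ ∈ P := hx₀Eff.2
  have haP : a ∈ P := eff_memP haEff
  have hx₀P : x₀ ∈ P := hmemP _ hx₀C
  rcases lt_trichotomy r 1 with hlt | heq | hgt
  · -- r < 1 : contradicts sharpness of x₀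
    exfalso
    set m := min r (1 - r) with hmdef
    have hm0 : 0 < m := lt_min hrpos (by linarith)
    have hm1 : m ≤ r := min_le_left _ _
    have hm2 : m ≤ 1 - r := min_le_right _ _
    have hgE : m • a ∈ Eff P u := by
      constructor
      · show m • a - 0 ∈ P
        rw [sub_zero]; exact hP.2.1 _ hm0.le _ haP
      · show u - m • a ∈ P
        have h2 : u - m • a = (u - a) + (1 - m) • a := by module
        rw [h2]; exact hP.1 _ huP _ (hP.2.1 _ (by linarith) _ haP)
    have hg1 : leC P (m • a) x₀ := by
      show x₀ - m • a ∈ P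
      have h2 : x₀ - m • a = (r - m) • a := by rw [hx₀r]; module
      rw [h2]; exact hP.2.1 _ (by linarith) _ haP
    have hg2 : leC P (m • a) (u - x₀) := by
      show (u - x₀) - m • a ∈ P
      have h2 : (u - x₀) - m • a = (u - a) + (1 - r - m) • a := by rw [hx₀r]; module
      rw [h2]; exact hP.1 _ huP _ (hP.2.1 _ (by linarith) _ haP)
    have hz : m • a = 0 := hx₀S1.1.2 _ hgE hg1 hg2
    have : a = 0 := by
      have h := congrArg (fun v => m⁻¹ • v) hz
      simpa [smul_smul, inv_mul_cancel₀ (ne_of_gt hm0)] using h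
    exact haneq this
  · rw [heq, one_smul] at hx₀r
    exact hx₀r ▸ hx₀C
  · -- r > 1 : contradicts sharpness of a
    exfalso
    set q := r⁻¹ with hqdef
    have hq0 : 0 < q := inv_pos.2 hrpos
    have hq1 : q < 1 := by
      rw [hqdef]; exact inv_lt_one_of_one_lt₀ hgt
    have haq : a = q • x₀ := by
      rw [hx₀r, smul_smul, hqdef, inv_mul_cancel₀ (ne_of_gt hrpos), one_smul]
    set m := min q (1 - q) with hmdef
    have hm0 : 0 < m := lt_min hq0 (by linarith)
    have hm1 : m ≤ q := min_le_left _ _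
    have hm2 : m ≤ 1 - q := min_le_right _ _
    have hgE : m • x₀ ∈ Eff P u := by
      constructor
      · show m • x₀ - 0 ∈ P
        rw [sub_zero]; exact hP.2.1 _ hm0.le _ hx₀P
      · show u - m • x₀ ∈ P
        have h2 : u - m • x₀ = (u - x₀) + (1 - m) • x₀ := by module
        rw [h2]; exact hP.1 _ hux₀ _ (hP.2.1 _ (by linarith) _ hx₀P)
    have hg1 : leC P (m • x₀) a := by
      show a - m • x₀ ∈ P
      have h2 : a - m • x₀ = (q - m) • x₀ := by rw [haq]; module
      rw [h2]; exact hP.2.1 _ (by linarith) _ hx₀P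
    have hg2 : leC P (m • x₀) (u - a) := by
      show (u - a) - m • x₀ ∈ P
      have h2 : (u - a) - m • x₀ = (u - x₀) + (1 - q - m) • x₀ := by rw [haq]; module
      rw [h2]; exact hP.1 _ hux₀ _ (hP.2.1 _ (by linarith) _ hx₀P)
    have hz : m • x₀ = 0 := ha.1.2 _ hgE hg1 hg2
    have : x₀ = 0 := by
      have h := congrArg (fun v => m⁻¹ • v) hz
      simpa [smul_smul, inv_mul_cancel₀ (ne_of_gt hm0)] using h
    exact hx₀nz this

/-- A context (as a tuple) consists of pairwise distinct elements. -/
lemma context_inj {P : Set V} {u : V} (hP : IsCone P) (h0 : (0:V) ∈ P) {n : ℕ}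
    {c : Fin n → V} (hc : IsContext P u c) : Function.Injective c := by
  classical
  intro i j hij
  by_contra hne
  have hmemP : ∀ k, c k ∈ P := fun k => eff_memP (hc.1 k).1.1
  have hj' : j ∈ (Finset.univ.erase i : Finset (Fin n)) :=
    Finset.mem_erase.2 ⟨hne ∘ Eq.symm ∘ id, Finset.mem_univ j⟩
  have h1 : c i + ∑ k ∈ Finset.univ.erase i, c k = u := by
    rw [Finset.add_sum_erase _ _ (Finset.mem_univ i)]; exact hc.2
  have h2 : c j + ∑ k ∈ (Finset.univ.erase i).erase j, c k = ∑ k ∈ Finset.univ.erase i, c k :=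
    Finset.add_sum_erase _ _ hj'
  have hrest : ∑ k ∈ (Finset.univ.erase i).erase j, c k ∈ P :=
    cone_sum_mem hP h0 _ _ fun k _ => hmemP k
  have hsub : u - c i - c j = ∑ k ∈ (Finset.univ.erase i).erase j, c k := by
    rw [← h1, ← h2]; abel
  have hciEff : c i ∈ Eff P u := (hc.1 i).1.1
  have hgz : c i = 0 := by
    refine (hc.1 i).1.2 (c i) hciEff ?_ ?_
    · show c i - c i ∈ P
      simpa using h0
    · show (u - c i) - c i ∈ P
      have : (u - c i) - c i = u - c i - c j := by rw [hij]
      rw [this, hsub]; exact hrest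
  exact (hc.1 i).2.2.1 hgz

/-- Spectral decomposition in terms of a `Finset` context. -/
lemma spectral_rep_finset {P : Set V} {u : V} (hP : IsCone P) (h0 : (0:V) ∈ P)
    (hspec : Spectral P u) {f : V} (hf : f ∈ Eff P u) :
    ∃ (C : Finset V) (ν : V → ℝ), IsContextF P u C ∧ f = ∑ x ∈ C, ν x • x := by
  classical
  obtain ⟨n, c, μ, hc, hμ, hrep⟩ := hspec f hf
  have hinj : Function.Injective c := context_inj hP h0 hc
  refine ⟨Finset.univ.image c, fun x => if h : ∃ i, c i = x then μ h.choose else 0, ⟨?_, ?_⟩, ?_⟩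
  · intro a ha
    obtain ⟨i, _, rfl⟩ := Finset.mem_image.1 ha
    exact hc.1 i
  · rw [Finset.sum_image fun i _ j _ h => hinj h]; exact hc.2
  · rw [Finset.sum_image fun i _ j _ h => hinj h, hrep]
    refine Finset.sum_congr rfl fun i _ => ?_
    have hex : ∃ j, c j = c i := ⟨i, rfl⟩
    have h3 : (if h : ∃ j, c j = c i then μ h.choose else 0) = μ i := by
      rw [dif_pos hex]; exact congrArg μ (hinj hex.choose_spec)
    simp only [h3]

/-- If a spectral effect algebra has two distinct contexts, then the set of all its
contexts is uncountable. -/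
theorem stmt_7 (P : Set V) (hP : IsCone P) (u : V) (hu : u ∈ P)
    (hspec : Spectral P u)
    (hstate : ∀ a ∈ S1 P u, ∃ s : V →ₗ[ℝ] ℝ, IsState P u s ∧ s a = 1)
    (A B : Finset V) (hA : IsContextF P u A) (hB : IsContextF P u B) (hAB : A ≠ B) :
    ¬ {C : Finset V | IsContextF P u C}.Countable := by
  classical
  intro hcount
  have h0 : (0:V) ∈ P := cone_zero hP hu
  -- Step 1: find b ∈ B \ A
  obtain ⟨b, hbB, hbA⟩ : ∃ b ∈ B, b ∉ A := by
    by_contra h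
    push_neg at h
    have hBA : B ⊆ A := h
    have hnAB : ¬ A ⊆ B := fun hsub => hAB (Finset.Subset.antisymm hsub hBA)
    obtain ⟨a0, ha0⟩ : (A \ B).Nonempty := Finset.sdiff_nonempty.2 hnAB
    have hsd : ∑ x ∈ A \ B, x = 0 := by
      have h2 := Finset.sum_sdiff (f := fun x => x) hBA
      rw [hA.2, hB.2] at h2
      exact add_right_cancel (a := ∑ x ∈ A \ B, x) (b := u) (c := 0) (by rw [h2, zero_add])
    have := cone_sum_eq_zero hP h0 (A \ B) (fun x => x)
      (fun x hx => eff_memP (hA.1 x (Finset.mem_sdiff.1 hx).1).1.1) hsd a0 ha0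
    exact (hA.1 a0 (Finset.mem_sdiff.1 ha0).1).2.2.1 this
  have hbS1 : b ∈ S1 P u := hB.1 b hbB
  obtain ⟨sb, hsb, hsbb⟩ := hstate b hbS1
  -- Step 2: find a ∈ A with u - (a + b) ∉ P
  obtain ⟨a, haA, hab⟩ : ∃ a ∈ A, u - (a + b) ∉ P := by
    by_contra h
    push_neg at h
    have hall : ∀ x ∈ A, sb x = 0 := by
      intro x hx
      have h1 : (0:ℝ) ≤ sb (u - (x + b)) := hsb.1 _ (h x hx)
      rw [map_sub, map_add, hsb.2, hsbb] at h1
      have h2 : (0:ℝ) ≤ sb x := hsb.1 x (eff_memP (hA.1 x hx).1.1)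
      linarith
    have hz : sb u = 0 := by
      rw [← hA.2, map_sum, Finset.sum_eq_zero hall]
    rw [hsb.2] at hz; norm_num at hz
  have haS1 : a ∈ S1 P u := hA.1 a haA
  have hane : a ≠ b := fun h => hbA (h ▸ haA)
  have haEff : a ∈ Eff P u := haS1.1.1
  have hbEff : b ∈ Eff P u := hbS1.1.1
  have haP : a ∈ P := eff_memP haEff
  have hbP : b ∈ P := eff_memP hbEff
  -- chosen states
  obtain ⟨st, hst⟩ : ∃ st : V → (V →ₗ[ℝ] ℝ), ∀ x ∈ S1 P u, IsState P u (st x) ∧ st x x = 1 :=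
    ⟨fun x => if h : x ∈ S1 P u then (hstate x h).choose else 0,
     fun x hx => by simp only [dif_pos hx]; exact (hstate x hx).choose_spec⟩
  -- the segment of effects
  set F : ℝ → V := fun l => l • a + (1 - l) • b with hFdef
  have hFeff : ∀ l ∈ Set.Ioo (0:ℝ) 1, F l ∈ Eff P u := by
    intro l hl
    constructor
    · show F l - 0 ∈ P
      rw [sub_zero]
      exact hP.1 _ (hP.2.1 l hl.1.le a haP) _ (hP.2.1 _ (by linarith [hl.2]) b hbP)
    · show u - F l ∈ P
      have h2 : u - F l = l • (u - a) + (1 - l) • (u - b) := by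
        simp only [hFdef]; module
      rw [h2]
      exact hP.1 _ (hP.2.1 l hl.1.le _ haEff.2) _ (hP.2.1 _ (by linarith [hl.2]) _ hbEff.2)
  have hrep : ∀ l ∈ Set.Ioo (0:ℝ) 1, ∃ (C : Finset V) (ν : V → ℝ),
      IsContextF P u C ∧ F l = ∑ x ∈ C, ν x • x :=
    fun l hl => spectral_rep_finset hP h0 hspec (hFeff l hl)
  choose! G ν hG hGrep using hrep
  have hmaps : Set.MapsTo G (Set.Ioo (0:ℝ) 1) {C : Finset V | IsContextF P u C} :=
    fun l hl => hG l hl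
  have hIoo : ¬ (Set.Ioo (0:ℝ) 1).Countable := by
    intro h
    rw [← Cardinal.le_aleph0_iff_set_countable,
      Cardinal.mk_Ioo_real (by norm_num : (0:ℝ) < 1)] at h
    exact absurd h (not_le.mpr Cardinal.aleph0_lt_continuum)
  have hninj : ¬ Set.InjOn G (Set.Ioo (0:ℝ) 1) :=
    fun hinj => hIoo (hmaps.countable_of_injOn hinj hcount)
  rw [Set.InjOn] at hninj
  push_neg at hninj
  obtain ⟨l1, hl1, l2, hl2, hGeq, hlne⟩ := hninj
  set C := G l1 with hCdef
  have hC : IsContextF P u C := hG l1 hl1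
  set α : V → ℝ := fun x => st x a with hαdef
  set β : V → ℝ := fun x => st x b with hβdef
  set Sa := ∑ x ∈ C, α x • x with hSadef
  set Sb := ∑ x ∈ C, β x • x with hSbdef
  have key : ∀ l, l ∈ Set.Ioo (0:ℝ) 1 → G l = C →
      l • a + (1 - l) • b = l • Sa + (1 - l) • Sb := by
    intro l hl hGl
    have hrepl : F l = ∑ x ∈ C, ν l x • x := by rw [← hGl]; exact hGrep l hl
    have hcoeff : ∀ x ∈ C, ν l x = l * α x + (1 - l) * β x := by
      intro x hx
      have hxS1 := hC.1 x hx
      have hstx := hst x hxS1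
      have h2 : st x (F l) = ν l x := coeff_eq hC hx hstx.1 hstx.2 hrepl
      rw [← h2]
      simp only [hFdef, map_add, map_smul, smul_eq_mul, hαdef, hβdef]
    calc l • a + (1 - l) • b = F l := by rw [hFdef]
      _ = ∑ x ∈ C, (l * α x + (1 - l) * β x) • x := by
          rw [hrepl]; exact Finset.sum_congr rfl fun x hx => by rw [hcoeff x hx]
      _ = l • Sa + (1 - l) • Sb := by
          rw [hSadef, hSbdef, Finset.smul_sum, Finset.smul_sum, ← Finset.sum_add_distrib]
          exact Finset.sum_congr rfl fun x _ => by rw [add_smul, mul_smul, mul_smul]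
  have h1 := key l1 hl1 rfl
  have h2 := key l2 hl2 hGeq.symm
  have e1 : l1 • (a - Sa) + (1 - l1) • (b - Sb) = 0 := by
    linear_combination (norm := module) h1
  have e2 : l2 • (a - Sa) + (1 - l2) • (b - Sb) = 0 := by
    linear_combination (norm := module) h2
  have e3 : (l1 - l2) • ((a - Sa) - (b - Sb)) = 0 := by
    linear_combination (norm := module) e1 - e2
  have e4 : (a - Sa) - (b - Sb) = 0 := by
    have h := congrArg (fun v => (l1 - l2)⁻¹ • v) e3
    simpa [smul_smul, inv_mul_cancel₀ (sub_ne_zero.mpr hlne)] using h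
  have e5 : a - Sa = b - Sb := sub_eq_zero.mp e4
  have e6 : a - Sa = 0 := by
    rw [e5] at e1
    have h := e1
    rw [← add_smul] at h
    have h7 : l1 + (1 - l1) = (1:ℝ) := by ring
    rw [h7, one_smul] at h
    rw [e5]; exact h
  have haSa : a = Sa := sub_eq_zero.mp e6
  have hbSb : b = Sb := sub_eq_zero.mp (e5 ▸ e6)
  -- atoms belong to C
  have hαnn : ∀ x ∈ C, 0 ≤ α x := fun x hx => (hst x (hC.1 x hx)).1.1 a haP
  have hβnn : ∀ x ∈ C, 0 ≤ β x := fun x hx => (hst x (hC.1 x hx)).1.1 b hbP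
  have haC : a ∈ C := atom_mem hP h0 hC haS1 hαnn haSa
  have hbC : b ∈ C := atom_mem hP h0 hC hbS1 hβnn hbSb
  -- contradiction: u - (a + b) ∈ P
  apply hab
  have hbC' : b ∈ C.erase a := Finset.mem_erase.2 ⟨fun h => hane h.symm, hbC⟩
  have hA1 : a + ∑ x ∈ C.erase a, x = u := by
    rw [Finset.add_sum_erase _ (fun x => x) haC]; exact hC.2
  have hA2 : b + ∑ x ∈ (C.erase a).erase b, x = ∑ x ∈ C.erase a, x :=
    Finset.add_sum_erase _ (fun x => x) hbC'
  have hrest : ∑ x ∈ (C.erase a).erase b, x ∈ P :=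
    cone_sum_mem hP h0 _ _ fun x hx =>
      eff_memP (hC.1 x (Finset.mem_of_mem_erase (Finset.mem_of_mem_erase hx))).1.1
  have hfin : u - (a + b) = ∑ x ∈ (C.erase a).erase b, x := by
    rw [← hA1, ← hA2]; abel
  rw [hfin]; exact hrest
end

section
/- Suppose E₁ and E₂ are spectral, and suppose there exist f₁ ∈ E₁ that is not a real scalar multiple of u₁ and f₂ ∈ E₂ that is not a real scalar multiple of u₂. Then the direct convex sum E₁ ⊕ E₂, defined as the interval [0,ū] in the quotient ordered vector space W = (V₁ × V₂)/span{(u₁,−u₂)} with positive cone the image of C₁ × C₂ and ū the image of (u₁,0), is not a spectral effect algebra. -/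
variable {V : Type*} [AddCommGroup V] [Module ℝ V]

/-! Write `π` for the quotient map and `ū = π (u₁, 0) = π (0, u₂)`. A one-dimensional element of
`[0, ū]` has a lift lying in `C₁ × 0` or in `0 × C₂`: for a lift `(x, y)` one-dimensionality makes
`π (x, 0) ≤ π (x, y)` a multiple of it, which forces either `y = 0` or `x ∈ ℝ₊ u₁`, and in the
latter case `(x, 0)` can be traded for a multiple of `(0, u₂)`.

Take a spectral decomposition of `π (f₁ / 2, f₂ / 2)` and lift its context in this way. Since
`f₁ ∉ ℝ u₁`, some atom is `π (x, 0)`; since `f₂ ∉ ℝ u₂`, the second coordinates of the lifts sum to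
`t u₂` with `t > 0`. The first coordinates then sum to `s u₁`, so `π (x, 0) ≤ s ū` and
`t ū ≤ ū - π (x, 0)`: a small multiple of the atom lies below both the atom and its complement,
and the atom is not sharp. -/

section ConeOrder

variable {P : Set V}

theorem IsCone.zero_mem (hP : IsCone P) {x : V} (hx : x ∈ P) : (0 : V) ∈ P := by
  simpa using hP.2.1 0 le_rfl x hx

theorem IsCone.nonneg_of_smul_mem (hP : IsCone P) {u : V} (hu : u ∈ P) (hu0 : u ≠ 0) {c : ℝ}
    (h : c • u ∈ P) : 0 ≤ c := by
  by_contra! hc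
  have hneg : -(c • u) ∈ P := by
    simpa only [neg_smul] using hP.2.1 (-c) (by linarith) u hu
  rcases smul_eq_zero.mp (hP.2.2 _ h hneg) with h0 | h0
  · exact hc.ne h0
  · exact hu0 h0

theorem IsCone.sum_mem (hP : IsCone P) (h0 : (0 : V) ∈ P) {ι : Type*} {s : Finset ι}
    {g : ι → V} (hg : ∀ i ∈ s, g i ∈ P) : ∑ i ∈ s, g i ∈ P :=
  Finset.sum_induction g (· ∈ P) (fun x y hx hy => hP.1 x hx y hy) h0 hg

theorem IsCone.leC_sum (hP : IsCone P) {ι : Type*} [Fintype ι] {g : ι → V}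
    (hg : ∀ i, g i ∈ P) (j : ι) : leC P (g j) (∑ i, g i) := by
  classical
  rw [leC, ← Finset.add_sum_erase _ _ (Finset.mem_univ j), add_sub_cancel_left]
  exact hP.sum_mem (hP.zero_mem (hg j)) fun i _ => hg i

theorem IsCone.eq_zero_of_sum_eq_zero (hP : IsCone P) {ι : Type*} [Fintype ι] {g : ι → V}
    (hg : ∀ i, g i ∈ P) (hsum : ∑ i, g i = 0) (j : ι) : g j = 0 :=
  hP.2.2 _ (hg j) (by simpa [leC, hsum] using hP.leC_sum hg j)

theorem IsCone.leC_trans (hP : IsCone P) {a b c : V} (hab : leC P a b) (hbc : leC P b c) :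
    leC P a c := by
  simpa [leC] using hP.1 _ hbc _ hab

theorem IsCone.leC_smul (hP : IsCone P) {c : ℝ} (hc : 0 ≤ c) {v w : V} (h : leC P v w) :
    leC P (c • v) (c • w) := by
  simpa [leC, smul_sub] using hP.2.1 c hc _ h

theorem IsCone.smul_leC_smul (hP : IsCone P) {u : V} (hu : u ∈ P) {s t : ℝ} (hst : s ≤ t) :
    leC P (s • u) (t • u) := by
  simpa [leC, sub_smul] using hP.2.1 (t - s) (by linarith) u hu

theorem IsCone.not_sharp_of_leC_smul (hP : IsCone P) {u a : V} (ha : a ≠ 0) {s t : ℝ}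
    (hs : 0 ≤ s) (has : leC P a (s • u)) (ht : 0 < t) (hta : leC P (t • u) (u - a)) :
    ¬ Sharp P u a := by
  rintro ⟨⟨ha0, hau⟩, hsharp⟩
  have hu : u ∈ P := by simpa [leC] using hP.leC_trans ha0 hau
  set ε := t / (s + t) with hε
  have hε0 : 0 < ε := by positivity
  have hεs : ε * s ≤ t := by
    rw [hε, div_mul_eq_mul_div, div_le_iff₀ (by linarith)]
    nlinarith
  have hεa : leC P (ε • a) a := by
    have hε1 : 0 ≤ 1 - ε := by
      rw [sub_nonneg, hε, div_le_one₀ (by linarith)]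
      linarith
    simpa [leC, sub_smul] using hP.2.1 _ hε1 a (by simpa [leC] using ha0)
  have hεu : leC P (ε • a) (u - a) := by
    refine hP.leC_trans (hP.leC_smul hε0.le has) (hP.leC_trans ?_ hta)
    rw [smul_smul]
    exact hP.smul_leC_smul hu hεs
  have hεeff : ε • a ∈ Eff P u := ⟨by simpa using hP.leC_smul hε0.le ha0, hP.leC_trans hεa hau⟩
  exact ha ((smul_eq_zero.mp (hsharp _ hεeff hεa hεu)).resolve_left hε0.ne')

end ConeOrder

namespace DirectConvexSum

variable {V₁ V₂ : Type*} [AddCommGroup V₁] [Module ℝ V₁] [AddCommGroup V₂] [Module ℝ V₂]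
  {C₁ : Set V₁} {C₂ : Set V₂} {u₁ : V₁} {u₂ : V₂}

local notation "π" => Submodule.mkQ (Submodule.span ℝ {((u₁, -u₂) : V₁ × V₂)})

theorem mkQ_eq_mkQ_iff {x x' : V₁} {y y' : V₂} :
    π (x, y) = π (x', y') ↔ ∃ c : ℝ, x = x' + c • u₁ ∧ y' = y + c • u₂ := by
  simp only [Submodule.mkQ_apply, Submodule.Quotient.eq, Submodule.mem_span_singleton,
    Prod.mk_sub_mk, Prod.smul_mk, Prod.mk.injEq, smul_neg]
  refine exists_congr fun c => and_congr ?_ ?_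
  · rw [eq_comm, sub_eq_iff_eq_add']
  · rw [neg_eq_iff_eq_neg, neg_sub, eq_comm, sub_eq_iff_eq_add']

theorem smul_mkQ_unit (t : ℝ) : t • π (u₁, 0) = π (0, t • u₂) := by
  rw [← map_smul, Prod.smul_mk, smul_zero, mkQ_eq_mkQ_iff]
  exact ⟨t, by rw [zero_add], by rw [zero_add]⟩

theorem isCone_image_mkQ (h₁ : IsCone C₁) (h₂ : IsCone C₂) (hu₁ : u₁ ∈ C₁) (hu₂ : u₂ ∈ C₂)
    (hn₁ : u₁ ≠ 0) (hn₂ : u₂ ≠ 0) : IsCone (π '' (C₁ ×ˢ C₂)) := by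
  refine ⟨?_, ?_, ?_⟩
  · rintro _ ⟨p, ⟨hp₁, hp₂⟩, rfl⟩ _ ⟨q, ⟨hq₁, hq₂⟩, rfl⟩
    exact ⟨p + q, ⟨h₁.1 _ hp₁ _ hq₁, h₂.1 _ hp₂ _ hq₂⟩, map_add _ _ _⟩
  · rintro c hc _ ⟨p, ⟨hp₁, hp₂⟩, rfl⟩
    exact ⟨c • p, ⟨h₁.2.1 c hc _ hp₁, h₂.2.1 c hc _ hp₂⟩, map_smul _ _ _⟩
  · rintro _ ⟨⟨x, y⟩, ⟨hx, hy⟩, rfl⟩ ⟨⟨x', y'⟩, ⟨hx', hy'⟩, hneg⟩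
    have hsum : π (x + x', y + y') = π (0, 0) := by
      rw [← Prod.mk_add_mk, map_add, hneg, add_neg_cancel, Prod.mk_zero_zero, map_zero]
    obtain ⟨c, hcx, hcy⟩ := mkQ_eq_mkQ_iff.mp hsum
    have hc : c = 0 := by
      refine le_antisymm ?_ (h₁.nonneg_of_smul_mem hu₁ hn₁ ?_)
      · refine neg_nonneg.mp (h₂.nonneg_of_smul_mem hu₂ hn₂ ?_)
        rw [neg_smul, ← eq_neg_of_add_eq_zero_left hcy.symm]
        exact h₂.1 _ hy _ hy'
      · rw [← zero_add (c • u₁), ← hcx]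
        exact h₁.1 _ hx _ hx'
    subst hc
    simp only [zero_smul, add_zero] at hcx hcy
    rw [h₁.2.2 x hx (by rwa [neg_eq_of_add_eq_zero_right hcx]),
      h₂.2.2 y hy (by rwa [neg_eq_of_add_eq_zero_right hcy.symm]), Prod.mk_zero_zero, map_zero]

theorem mkQ_smul_mem_eff (h₁ : IsCone C₁) (h₂ : IsCone C₂) {s t : ℝ} (hs : 0 ≤ s) (ht : 0 ≤ t)
    (hst : s + t = 1) {x : V₁} {y : V₂} (hx : x ∈ Eff C₁ u₁) (hy : y ∈ Eff C₂ u₂) :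
    π (s • x, t • y) ∈ Eff (π '' (C₁ ×ˢ C₂)) (π (u₁, 0)) := by
  obtain ⟨hx0, hxu⟩ := hx
  obtain ⟨hy0, hyu⟩ := hy
  rw [leC, sub_zero] at hx0 hy0
  refine ⟨?_, ?_⟩
  · rw [leC, sub_zero]
    exact Set.mem_image_of_mem _ ⟨h₁.2.1 s hs x hx0, h₂.2.1 t ht y hy0⟩
  · have hunit : π (u₁, 0) = π (s • u₁, t • u₂) := by
      rw [← one_smul ℝ (π (u₁, 0)), ← hst, add_smul, smul_mkQ_unit t, ← map_smul, ← map_add,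
        Prod.smul_mk, smul_zero, Prod.mk_add_mk, add_zero, zero_add]
    rw [leC, hunit, ← map_sub, Prod.mk_sub_mk, ← smul_sub, ← smul_sub]
    exact Set.mem_image_of_mem _ ⟨h₁.2.1 s hs _ hxu, h₂.2.1 t ht _ hyu⟩

theorem exists_lift_of_oneDim (h₁ : IsCone C₁) (h₂ : IsCone C₂) (hu₁ : u₁ ∈ C₁)
    (hu₂ : u₂ ∈ C₂) (hn₁ : u₁ ≠ 0) (hn₂ : u₂ ≠ 0) {b : (V₁ × V₂) ⧸ Submodule.span ℝ {(u₁, -u₂)}}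
    (hb : OneDim (π '' (C₁ ×ˢ C₂)) (π (u₁, 0)) b) :
    ∃ w ∈ C₁ ×ˢ C₂, π w = b ∧ (w.1 = 0 ∨ w.2 = 0) := by
  obtain ⟨⟨hb0, hbu⟩, -, hle⟩ := hb
  obtain ⟨⟨x, y⟩, ⟨hx, hy⟩, rfl⟩ : b ∈ π '' (C₁ ×ˢ C₂) := by
    simpa only [leC, sub_zero] using hb0
  have hxb : leC (π '' (C₁ ×ˢ C₂)) (π (x, 0)) (π (x, y)) := by
    rw [leC, ← map_sub, Prod.mk_sub_mk, sub_self, sub_zero]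
    exact Set.mem_image_of_mem _ ⟨h₁.zero_mem hx, hy⟩
  have hxeff : π (x, 0) ∈ Eff (π '' (C₁ ×ˢ C₂)) (π (u₁, 0)) := by
    refine ⟨?_, (isCone_image_mkQ h₁ h₂ hu₁ hu₂ hn₁ hn₂).leC_trans hxb hbu⟩
    rw [leC, sub_zero]
    exact Set.mem_image_of_mem _ ⟨hx, h₂.zero_mem hy⟩
  obtain ⟨τ, -, hτ1, hτ⟩ := hle _ hxeff hxb
  rw [← map_smul, Prod.smul_mk, mkQ_eq_mkQ_iff] at hτ
  obtain ⟨c, hcx, hcy⟩ := hτ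
  rcases hτ1.lt_or_eq with hτ1 | rfl
  · -- `x` is a nonnegative multiple of `u₁`, so `π (x, y) = π (0, y + r • u₂)`
    set r := (1 - τ)⁻¹ * c
    have hxr : x = r • u₁ := by
      have h1τ : (1 - τ) • x = c • u₁ := by
        rw [sub_smul, one_smul, sub_eq_iff_eq_add']
        exact hcx
      rw [mul_smul, ← h1τ, inv_smul_smul₀ (sub_ne_zero.mpr hτ1.ne')]
    have hr : 0 ≤ r := h₁.nonneg_of_smul_mem hu₁ hn₁ (hxr ▸ hx)
    refine ⟨(0, y + r • u₂), ⟨h₁.zero_mem hx, h₂.1 _ hy _ (h₂.2.1 r hr _ hu₂)⟩, ?_, .inl rfl⟩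
    exact mkQ_eq_mkQ_iff.mpr
      ⟨-r, by rw [hxr, neg_smul, add_neg_cancel], by rw [neg_smul, add_neg_cancel_right]⟩
  · have hc : c = 0 := by simpa [hn₁] using hcx
    have hy0 : y = 0 := by simpa [hc] using hcy
    exact ⟨(x, 0), ⟨hx, h₂.zero_mem hy⟩, by rw [hy0], .inr rfl⟩

theorem exists_fst_eq_smul_of_mkQ_eq_sum {ι : Type*} [Fintype ι] {w : ι → V₁ × V₂} {μ : ι → ℝ}
    {x : V₁} {y : V₂} (h : π (x, y) = ∑ k, μ k • π (w k)) (hw : ∀ k, (w k).1 = 0) :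
    ∃ c : ℝ, x = c • u₁ := by
  simp only [← map_smul, ← map_sum] at h
  have hsum : ∑ k, μ k • w k = (0, ∑ k, μ k • (w k).2) :=
    Prod.ext (by simp [Prod.fst_sum, hw]) (by simp [Prod.snd_sum])
  obtain ⟨c, hc, -⟩ := mkQ_eq_mkQ_iff.mp (hsum ▸ h)
  exact ⟨c, by rw [hc, zero_add]⟩

theorem exists_snd_eq_smul_of_mkQ_eq_sum {ι : Type*} [Fintype ι] {w : ι → V₁ × V₂} {μ : ι → ℝ}
    {x : V₁} {y : V₂} (h : π (x, y) = ∑ k, μ k • π (w k)) (hw : ∀ k, (w k).2 = 0) :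
    ∃ c : ℝ, y = c • u₂ := by
  simp only [← map_smul, ← map_sum] at h
  have hsum : ∑ k, μ k • w k = (∑ k, μ k • (w k).1, 0) :=
    Prod.ext (by simp [Prod.fst_sum]) (by simp [Prod.snd_sum, hw])
  obtain ⟨c, -, hc⟩ := mkQ_eq_mkQ_iff.mp (hsum ▸ h)
  exact ⟨-c, by rw [neg_smul, eq_neg_of_add_eq_zero_left hc.symm]⟩

theorem not_sharp_of_sum_eq_unit (h₁ : IsCone C₁) (h₂ : IsCone C₂) (hu₁ : u₁ ∈ C₁)
    (hu₂ : u₂ ∈ C₂) (hn₁ : u₁ ≠ 0) (hn₂ : u₂ ≠ 0) {ι : Type*} [Fintype ι] {w : ι → V₁ × V₂}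
    (hw : ∀ k, w k ∈ C₁ ×ˢ C₂) (hsum : ∑ k, π (w k) = π (u₁, 0)) (hsnd : ∑ k, (w k).2 ≠ 0)
    {j : ι} (hj : (w j).2 = 0) (hj0 : π (w j) ≠ 0) :
    ¬ Sharp (π '' (C₁ ×ˢ C₂)) (π (u₁, 0)) (π (w j)) := by
  set X := ∑ k, (w k).1
  set Y := ∑ k, (w k).2
  have hXY : π (X, Y) = π (u₁, 0) := by
    rw [← hsum, ← map_sum]
    exact congrArg π (Prod.ext (Prod.fst_sum ..).symm (Prod.snd_sum ..).symm)
  obtain ⟨c, hX, hY⟩ := mkQ_eq_mkQ_iff.mp hXY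
  have hX' : X = (1 + c) • u₁ := by rw [hX, add_smul, one_smul]
  have hY' : Y = (-c) • u₂ := by rw [neg_smul, eq_neg_of_add_eq_zero_left hY.symm]
  have hxX : leC C₁ (w j).1 X := h₁.leC_sum (fun k => (hw k).1) j
  have hs : 0 ≤ 1 + c :=
    h₁.nonneg_of_smul_mem hu₁ hn₁ (hX' ▸ h₁.sum_mem (h₁.zero_mem hu₁) fun k _ => (hw k).1)
  have ht : 0 < -c := by
    refine lt_of_le_of_ne (h₂.nonneg_of_smul_mem hu₂ hn₂ ?_) fun h => hsnd ?_
    · exact hY' ▸ h₂.sum_mem (h₂.zero_mem hu₂) fun k _ => (hw k).2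
    · rw [hY', ← h, zero_smul]
  have hwj : w j = ((w j).1, 0) := Prod.ext rfl hj
  refine (isCone_image_mkQ h₁ h₂ hu₁ hu₂ hn₁ hn₂).not_sharp_of_leC_smul hj0 hs ?_ ht ?_
  · rw [leC, ← map_smul, Prod.smul_mk, smul_zero, ← hX', hwj, ← map_sub, Prod.mk_sub_mk, sub_zero]
    exact Set.mem_image_of_mem _ ⟨hxX, h₂.zero_mem hu₂⟩
  · rw [smul_mkQ_unit, ← hY', ← hXY, hwj, leC, ← map_sub, ← map_sub]
    simp only [Prod.mk_sub_mk, sub_zero, sub_self]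
    exact Set.mem_image_of_mem _ ⟨hxX, h₂.zero_mem hu₂⟩

end DirectConvexSum

open DirectConvexSum

theorem stmt_13_general {V₁ V₂ : Type*} [AddCommGroup V₁] [Module ℝ V₁]
    [AddCommGroup V₂] [Module ℝ V₂]
    (C₁ : Set V₁) (C₂ : Set V₂) (h₁ : IsCone C₁) (h₂ : IsCone C₂)
    (u₁ : V₁) (u₂ : V₂) (hu₁ : u₁ ∈ C₁) (hu₂ : u₂ ∈ C₂)
    (hn₁ : u₁ ≠ 0) (hn₂ : u₂ ≠ 0)
    (f₁ : V₁) (hf₁ : f₁ ∈ Eff C₁ u₁) (hf₁u : ∀ c : ℝ, f₁ ≠ c • u₁)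
    (f₂ : V₂) (hf₂ : f₂ ∈ Eff C₂ u₂) (hf₂u : ∀ c : ℝ, f₂ ≠ c • u₂)
    (S : Submodule ℝ (V₁ × V₂)) (hS : S = Submodule.span ℝ {(u₁, -u₂)})
    (C : Set ((V₁ × V₂) ⧸ S)) (hC : C = S.mkQ '' (C₁ ×ˢ C₂)) :
    ¬ Spectral C (S.mkQ (u₁, 0)) := by
  subst hS hC
  intro hspec
  obtain ⟨n, a, μ, ⟨ha, hsum⟩, -, hf⟩ := hspec _ <|
    mkQ_smul_mem_eff (s := 2⁻¹) (t := 2⁻¹) h₁ h₂ (by norm_num) (by norm_num) (by norm_num) hf₁ hf₂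
  choose w hw hwa hw0 using fun k => exists_lift_of_oneDim h₁ h₂ hu₁ hu₂ hn₁ hn₂ (ha k).2
  simp only [← hwa] at ha hsum hf
  obtain ⟨j, hj⟩ : ∃ j, (w j).2 = 0 := by
    by_contra! h
    obtain ⟨c, hc⟩ := exists_fst_eq_smul_of_mkQ_eq_sum hf fun k => (hw0 k).resolve_right (h k)
    exact hf₁u (2 * c) (by rw [mul_smul, ← hc, smul_inv_smul₀ two_ne_zero])
  have hsnd : ∑ k, (w k).2 ≠ 0 := fun h => by
    obtain ⟨c, hc⟩ := exists_snd_eq_smul_of_mkQ_eq_sum hf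
      (h₂.eq_zero_of_sum_eq_zero (fun k => (hw k).2) h)
    exact hf₂u (2 * c) (by rw [mul_smul, ← hc, smul_inv_smul₀ two_ne_zero])
  exact not_sharp_of_sum_eq_unit h₁ h₂ hu₁ hu₂ hn₁ hn₂ hw hsum hsnd hj (ha j).2.2.1 (ha j).1

/-- The direct convex sum of two spectral effect algebras (each containing an
effect that is not a scalar multiple of the unit) is not a spectral effect
algebra. -/
theorem stmt_13 {V₁ V₂ : Type*} [AddCommGroup V₁] [Module ℝ V₁]
    [AddCommGroup V₂] [Module ℝ V₂]
    (C₁ : Set V₁) (C₂ : Set V₂) (h₁ : IsCone C₁) (h₂ : IsCone C₂)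
    (u₁ : V₁) (u₂ : V₂) (hu₁ : u₁ ∈ C₁) (hu₂ : u₂ ∈ C₂)
    (hn₁ : u₁ ≠ 0) (hn₂ : u₂ ≠ 0)
    (hspec₁ : Spectral C₁ u₁) (hspec₂ : Spectral C₂ u₂)
    (f₁ : V₁) (hf₁ : f₁ ∈ Eff C₁ u₁) (hf₁u : ∀ c : ℝ, f₁ ≠ c • u₁)
    (f₂ : V₂) (hf₂ : f₂ ∈ Eff C₂ u₂) (hf₂u : ∀ c : ℝ, f₂ ≠ c • u₂)
    (S : Submodule ℝ (V₁ × V₂)) (hS : S = Submodule.span ℝ {(u₁, -u₂)})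
    (C : Set ((V₁ × V₂) ⧸ S)) (hC : C = S.mkQ '' (C₁ ×ˢ C₂)) :
    ¬ Spectral C (S.mkQ (u₁, 0)) :=
  stmt_13_general C₁ C₂ h₁ h₂ u₁ u₂ hu₁ hu₂ hn₁ hn₂ f₁ hf₁ hf₁u f₂ hf₂ hf₂u S hS C hC
end

section
/- Suppose E is spectral and 𝔖(E) is sharply determining. Let A = {a₁,…,aₙ'} and B = {b₁,…,bₘ'} be contexts, let I₁,…,Iₙ be pairwise disjoint nonempty subsets of {1,…,n'} and J₁,…,Jₘ pairwise disjoint nonempty subsets of {1,…,m'}, set a'ᵢ = Σ_{j∈Iᵢ} aⱼ and b'ₖ = Σ_{l∈Jₖ} b_l, and suppose Σᵢ₌₁ⁿ μᵢ a'ᵢ = f = Σₖ₌₁ᵐ νₖ b'ₖ where μ₁ > ⋯ > μₙ > 0 and ν₁ > ⋯ > νₘ > 0. Then n = m, μᵢ = νᵢ for every i, and a'ᵢ = b'ᵢ for every i. -/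
variable {V : Type*} [AddCommGroup V] [Module ℝ V]

/-- The state space is sharply determining: for every sharp `f` and every `g ∈ E`
with `¬(f ≤ g)` there is a state `s` with `s f = 1 > s g`. -/
def SharplyDet (P : Set V) (u : V) : Prop :=
  ∀ f ∈ Eff P u, Sharp P u f → ∀ g ∈ Eff P u, ¬ leC P f g →
    ∃ s : V →ₗ[ℝ] ℝ, IsState P u s ∧ s f = 1 ∧ s g < 1


/-! The largest coefficient `μ₀` is the maximum of `s f` over all states `s`: since the values
`s (aⱼ)` are nonnegative and sum to one, `s f` is a sub-convex combination of the `μᵢ`, and a state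
that is `1` on an atom `aⱼ` with `j ∈ I₀` (such states exist by sharp determination) attains `μ₀`.
Hence `μ₀ = ν₀`, and the states attaining the maximum are exactly those that are `1` on the top
block. So every state that is `1` on an atom of `a'₀` is `1` on `b'₀`; as the atoms are sharp, sharp
determination upgrades this, one atom at a time, to `a'₀ ≤ b'₀`, and symmetrically. Cancelling the
top terms and inducting gives the rest. -/

open Finset Function

section Real

variable {ι : Type*} [Fintype ι] {μ x : ι → ℝ} {i₀ : ι}

theorem sum_mul_le_of_le_max (hμ : ∀ i, μ i ≤ μ i₀) (hμ₀ : 0 ≤ μ i₀) (hx : ∀ i, 0 ≤ x i)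
    (hx1 : ∑ i, x i ≤ 1) : ∑ i, μ i * x i ≤ μ i₀ :=
  calc ∑ i, μ i * x i ≤ ∑ i, μ i₀ * x i :=
        sum_le_sum fun i _ => mul_le_mul_of_nonneg_right (hμ i) (hx i)
    _ = μ i₀ * ∑ i, x i := (mul_sum ..).symm
    _ ≤ μ i₀ := mul_le_of_le_one_right hμ₀ hx1

theorem eq_one_of_sum_mul_eq_max (hμ : ∀ i ≠ i₀, μ i < μ i₀) (hμ₀ : 0 < μ i₀)
    (hx : ∀ i, 0 ≤ x i) (hx1 : ∑ i, x i ≤ 1) (h : ∑ i, μ i * x i = μ i₀) : x i₀ = 1 := by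
  have hle : ∀ i, 0 ≤ (μ i₀ - μ i) * x i := fun i => by
    rcases eq_or_ne i i₀ with rfl | hi
    · simp
    · exact mul_nonneg (sub_pos.2 (hμ i hi)).le (hx i)
  -- `μ i₀ - ∑ μ i x i` splits into two nonnegative parts, which must both vanish
  have hsplit : μ i₀ * (1 - ∑ i, x i) + ∑ i, (μ i₀ - μ i) * x i = 0 := by
    simp only [sub_mul, sum_sub_distrib, ← mul_sum, h]
    ring
  obtain ⟨hmass, hrest⟩ := (add_eq_zero_iff_of_nonneg
    (mul_nonneg hμ₀.le (sub_nonneg.2 hx1)) (sum_nonneg fun i _ => hle i)).1 hsplit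
  have hsum : ∑ i, x i = 1 := by
    linarith [(mul_eq_zero.1 hmass).resolve_left hμ₀.ne']
  have hzero : ∀ i ≠ i₀, x i = 0 := fun i hi => by
    have hi' := (sum_eq_zero_iff_of_nonneg fun i _ => hle i).1 hrest i (mem_univ i)
    exact (mul_eq_zero.1 hi').resolve_left (sub_pos.2 (hμ i hi)).ne'
  rwa [sum_eq_single i₀ (fun i _ hi => hzero i hi) (by simp)] at hsum

end Real

variable {P : Set V} {u : V}

set_option linter.unusedSectionVars false in
theorem mem_Eff_iff {v : V} : v ∈ Eff P u ↔ v ∈ P ∧ u - v ∈ P := by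
  simp [Eff, leC]

namespace IsCone

theorem zero_mem_s16 (hP : IsCone P) {x : V} (hx : x ∈ P) : (0 : V) ∈ P := by
  simpa using hP.2.1 0 le_rfl x hx

theorem sum_mem_s16 (hP : IsCone P) (h0 : (0 : V) ∈ P) {κ : Type*} {T : Finset κ} {f : κ → V}
    (h : ∀ i ∈ T, f i ∈ P) : ∑ i ∈ T, f i ∈ P :=
  sum_induction f (· ∈ P) (fun x y hx hy => hP.1 x hx y hy) h0 h

theorem leC_antisymm (hP : IsCone P) {v w : V} (hvw : leC P v w) (hwv : leC P w v) : v = w :=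
  sub_eq_zero.1 (hP.2.2 _ hwv (by simpa [leC] using hvw))

end IsCone

theorem SharplyDet.leC_of_forall_state (hsd : SharplyDet P u) {f g : V} (hf : Sharp P u f)
    (hg : g ∈ Eff P u) (h : ∀ s, IsState P u s → s f = 1 → s g = 1) : leC P f g := by
  by_contra hfg
  obtain ⟨s, hs, hsf, hsg⟩ := hsd f hf.1 hf g hg hfg
  exact hsg.ne (h s hs hsf)

theorem SharplyDet.exists_state_eq_one (hP : IsCone P) (hu : u ∈ P) (hsd : SharplyDet P u)
    {f : V} (hf : f ∈ S1 P u) : ∃ s, IsState P u s ∧ s f = 1 := by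
  have hf0 : ¬ leC P f 0 := fun h =>
    hf.2.2.1 (hP.2.2 f (mem_Eff_iff.1 hf.1.1).1 (by simpa [leC] using h))
  obtain ⟨s, hs, hsf, -⟩ := hsd f hf.1.1 hf.1 0 (mem_Eff_iff.2 ⟨hP.zero_mem_s16 hu, by simpa⟩) hf0
  exact ⟨s, hs, hsf⟩

namespace IsContext

variable {n' : ℕ} {a : Fin n' → V} {s : V →ₗ[ℝ] ℝ}

theorem mem_cone (ha : IsContext P u a) (j : Fin n') : a j ∈ P :=
  (mem_Eff_iff.1 (ha.1 j).1.1).1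

theorem state_nonneg (ha : IsContext P u a) (hs : IsState P u s) (j : Fin n') : 0 ≤ s (a j) :=
  hs.1 _ (ha.mem_cone j)

theorem sum_state_eq_one (ha : IsContext P u a) (hs : IsState P u s) : ∑ j, s (a j) = 1 := by
  rw [← map_sum, ha.2, hs.2]

theorem state_eq_ite_of_eq_one (ha : IsContext P u a) (hs : IsState P u s) {j₀ : Fin n'}
    (h : s (a j₀) = 1) (j : Fin n') : s (a j) = if j = j₀ then 1 else 0 := by
  split_ifs with hj
  · rwa [hj]
  · have hsum := ha.sum_state_eq_one hs
    rw [← add_sum_erase _ _ (mem_univ j₀), h, add_eq_left] at hsum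
    exact (sum_eq_zero_iff_of_nonneg fun i _ => ha.state_nonneg hs i).1 hsum j
      (mem_erase.2 ⟨hj, mem_univ j⟩)

theorem state_sum_nonneg (ha : IsContext P u a) (hs : IsState P u s) (T : Finset (Fin n')) :
    0 ≤ s (∑ j ∈ T, a j) := by
  rw [map_sum]
  exact sum_nonneg fun j _ => ha.state_nonneg hs j

theorem state_sum_eq_one_of_mem (ha : IsContext P u a) (hs : IsState P u s) {j₀ : Fin n'}
    (h : s (a j₀) = 1) {T : Finset (Fin n')} (hj₀ : j₀ ∈ T) : s (∑ j ∈ T, a j) = 1 := by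
  simp [map_sum, ha.state_eq_ite_of_eq_one hs h, hj₀]

theorem state_sum_eq_zero_of_notMem (ha : IsContext P u a) (hs : IsState P u s) {j₀ : Fin n'}
    (h : s (a j₀) = 1) {T : Finset (Fin n')} (hj₀ : j₀ ∉ T) : s (∑ j ∈ T, a j) = 0 := by
  simp [map_sum, ha.state_eq_ite_of_eq_one hs h, hj₀]

theorem sum_mem_Eff (hP : IsCone P) (hu : u ∈ P) (ha : IsContext P u a) (T : Finset (Fin n')) :
    ∑ j ∈ T, a j ∈ Eff P u := by
  have hsub : u - ∑ j ∈ T, a j = ∑ j ∈ Tᶜ, a j := by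
    rw [← ha.2, ← sum_compl_add_sum T a, add_sub_cancel_right]
  rw [mem_Eff_iff, hsub]
  exact ⟨hP.sum_mem_s16 (hP.zero_mem_s16 hu) fun j _ => ha.mem_cone j,
    hP.sum_mem_s16 (hP.zero_mem_s16 hu) fun j _ => ha.mem_cone j⟩

theorem sum_leC_of_forall_state (hP : IsCone P) (hu : u ∈ P) (hsd : SharplyDet P u)
    (ha : IsContext P u a) {g : V} (hg : g ∈ Eff P u) (T : Finset (Fin n'))
    (h : ∀ s, IsState P u s → ∀ j ∈ T, s (a j) = 1 → s g = 1) : leC P (∑ j ∈ T, a j) g := by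
  induction T using Finset.induction_on with
  | empty => simpa [leC] using (mem_Eff_iff.1 hg).1
  | insert j₀ T hj₀ ih =>
    have hT : g - ∑ j ∈ T, a j ∈ P := ih fun s hs j hj => h s hs j (mem_insert_of_mem hj)
    have hd : g - ∑ j ∈ T, a j ∈ Eff P u := by
      refine mem_Eff_iff.2 ⟨hT, ?_⟩
      rw [sub_sub_eq_add_sub, add_sub_right_comm]
      exact hP.1 _ (mem_Eff_iff.1 hg).2 _ (hP.sum_mem_s16 (hP.zero_mem_s16 hu) fun j _ => ha.mem_cone j)
    -- `a j₀` is sharp, and a state that is `1` on `a j₀` vanishes on the other atoms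
    have hj₀d : leC P (a j₀) (g - ∑ j ∈ T, a j) := by
      refine hsd.leC_of_forall_state (ha.1 j₀).1 hd fun s hs hs₁ => ?_
      rw [map_sub, h s hs j₀ (mem_insert_self _ _) hs₁, ha.state_sum_eq_zero_of_notMem hs hs₁ hj₀,
        sub_zero]
    simpa [leC, sum_insert hj₀, sub_sub, add_comm] using hj₀d

end IsContext

/-- The data of a decomposition `∑ᵢ μᵢ a'ᵢ` with blocks `a'ᵢ = ∑_{j ∈ I i} aⱼ`. -/
structure IsCoarseDecomposition (P : Set V) (u : V) {n' n : ℕ} (a : Fin n' → V)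
    (I : Fin n → Finset (Fin n')) (μ : Fin n → ℝ) : Prop where
  context : IsContext P u a
  nonempty : ∀ i, (I i).Nonempty
  disjoint : Pairwise (Disjoint on I)
  pos : ∀ i, 0 < μ i
  strictAnti : StrictAnti μ

namespace IsCoarseDecomposition

variable {n' m' n m : ℕ} {a : Fin n' → V} {b : Fin m' → V} {I : Fin n → Finset (Fin n')}
  {J : Fin m → Finset (Fin m')} {μ : Fin n → ℝ} {ν : Fin m → ℝ} {s : V →ₗ[ℝ] ℝ}

theorem sum_state_le_one (d : IsCoarseDecomposition P u a I μ) (hs : IsState P u s) :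
    ∑ i, s (∑ j ∈ I i, a j) ≤ 1 := by
  simp only [map_sum]
  rw [← sum_biUnion fun i _ i' _ hii' => d.disjoint hii']
  exact (sum_le_univ_sum_of_nonneg (d.context.state_nonneg hs)).trans_eq
    (d.context.sum_state_eq_one hs)

theorem state_eq_of_eq_one (d : IsCoarseDecomposition P u a I μ) (hs : IsState P u s)
    {i₀ : Fin n} {j₀ : Fin n'} (hj₀ : j₀ ∈ I i₀) (h : s (a j₀) = 1) :
    s (∑ i, μ i • ∑ j ∈ I i, a j) = μ i₀ := by
  have hblock : ∀ i ≠ i₀, s (∑ j ∈ I i, a j) = 0 := fun i hi =>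
    d.context.state_sum_eq_zero_of_notMem hs h (disjoint_left.1 (d.disjoint hi.symm) hj₀)
  rw [map_sum]
  simp only [map_smul, smul_eq_mul]
  rw [sum_eq_single i₀ (fun i _ hi => by rw [hblock i hi, mul_zero]) (by simp),
    d.context.state_sum_eq_one_of_mem hs h hj₀, mul_one]

theorem exists_state_eq (hP : IsCone P) (hu : u ∈ P) (hsd : SharplyDet P u)
    (d : IsCoarseDecomposition P u a I μ) (i : Fin n) :
    ∃ s, IsState P u s ∧ s (∑ i, μ i • ∑ j ∈ I i, a j) = μ i := by
  obtain ⟨j, hj⟩ := d.nonempty i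
  obtain ⟨s, hs, hsj⟩ := hsd.exists_state_eq_one hP hu (d.context.1 j)
  exact ⟨s, hs, d.state_eq_of_eq_one hs hj hsj⟩

theorem sum_smul_ne_zero (hP : IsCone P) (hu : u ∈ P) (hsd : SharplyDet P u)
    {μ : Fin (n + 1) → ℝ} {I : Fin (n + 1) → Finset (Fin n')}
    (d : IsCoarseDecomposition P u a I μ) : ∑ i, μ i • ∑ j ∈ I i, a j ≠ 0 := fun h => by
  obtain ⟨s, -, hsf⟩ := d.exists_state_eq hP hu hsd 0
  rw [h, map_zero] at hsf
  exact (d.pos 0).ne hsf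

section Top

variable {μ : Fin (n + 1) → ℝ} {ν : Fin (m + 1) → ℝ} {I : Fin (n + 1) → Finset (Fin n')}
  {J : Fin (m + 1) → Finset (Fin m')}

theorem state_le (d : IsCoarseDecomposition P u a I μ) (hs : IsState P u s) :
    s (∑ i, μ i • ∑ j ∈ I i, a j) ≤ μ 0 := by
  rw [map_sum]
  simp only [map_smul, smul_eq_mul]
  exact sum_mul_le_of_le_max (fun i => d.strictAnti.antitone (Fin.zero_le i)) (d.pos 0).le
    (fun i => d.context.state_sum_nonneg hs _) (d.sum_state_le_one hs)

theorem state_sum_zero_eq_one (d : IsCoarseDecomposition P u a I μ) (hs : IsState P u s)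
    (h : s (∑ i, μ i • ∑ j ∈ I i, a j) = μ 0) : s (∑ j ∈ I 0, a j) = 1 := by
  rw [map_sum] at h
  simp only [map_smul, smul_eq_mul] at h
  exact eq_one_of_sum_mul_eq_max (μ := μ) (x := fun i => s (∑ j ∈ I i, a j))
    (fun i hi => d.strictAnti (pos_iff_ne_zero.2 hi)) (d.pos 0)
    (fun i => d.context.state_sum_nonneg hs _) (d.sum_state_le_one hs) h

theorem coeff_zero_le (hP : IsCone P) (hu : u ∈ P) (hsd : SharplyDet P u)
    (d₁ : IsCoarseDecomposition P u a I μ) (d₂ : IsCoarseDecomposition P u b J ν)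
    (heq : ∑ i, μ i • ∑ j ∈ I i, a j = ∑ k, ν k • ∑ l ∈ J k, b l) : μ 0 ≤ ν 0 := by
  obtain ⟨s, hs, hsf⟩ := d₁.exists_state_eq hP hu hsd 0
  rw [← hsf, heq]
  exact d₂.state_le hs

theorem sum_zero_leC (hP : IsCone P) (hu : u ∈ P) (hsd : SharplyDet P u)
    (d₁ : IsCoarseDecomposition P u a I μ) (d₂ : IsCoarseDecomposition P u b J ν)
    (heq : ∑ i, μ i • ∑ j ∈ I i, a j = ∑ k, ν k • ∑ l ∈ J k, b l) (hμν : μ 0 = ν 0) :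
    leC P (∑ j ∈ I 0, a j) (∑ l ∈ J 0, b l) :=
  d₁.context.sum_leC_of_forall_state hP hu hsd (d₂.context.sum_mem_Eff hP hu _) _
    fun s hs _ hj hsj =>
      d₂.state_sum_zero_eq_one hs (by rw [← heq, d₁.state_eq_of_eq_one hs hj hsj, hμν])

theorem top_eq (hP : IsCone P) (hu : u ∈ P) (hsd : SharplyDet P u)
    (d₁ : IsCoarseDecomposition P u a I μ) (d₂ : IsCoarseDecomposition P u b J ν)
    (heq : ∑ i, μ i • ∑ j ∈ I i, a j = ∑ k, ν k • ∑ l ∈ J k, b l) :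
    μ 0 = ν 0 ∧ ∑ j ∈ I 0, a j = ∑ l ∈ J 0, b l := by
  have hμν : μ 0 = ν 0 :=
    (coeff_zero_le hP hu hsd d₁ d₂ heq).antisymm (coeff_zero_le hP hu hsd d₂ d₁ heq.symm)
  exact ⟨hμν, hP.leC_antisymm (sum_zero_leC hP hu hsd d₁ d₂ heq hμν)
    (sum_zero_leC hP hu hsd d₂ d₁ heq.symm hμν.symm)⟩

theorem tail (d : IsCoarseDecomposition P u a I μ) :
    IsCoarseDecomposition P u a (fun i => I i.succ) (fun i => μ i.succ) :=
  ⟨d.context, fun i => d.nonempty i.succ, fun _ _ h => d.disjoint ((Fin.succ_injective _).ne h),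
    fun i => d.pos i.succ, d.strictAnti.comp_strictMono (Fin.strictMono_succ)⟩

end Top

theorem unique (hP : IsCone P) (hu : u ∈ P) (hsd : SharplyDet P u)
    (d₁ : IsCoarseDecomposition P u a I μ) (d₂ : IsCoarseDecomposition P u b J ν)
    (heq : ∑ i, μ i • ∑ j ∈ I i, a j = ∑ k, ν k • ∑ l ∈ J k, b l) :
    ∃ h : n = m, (∀ i, μ i = ν (Fin.cast h i)) ∧
      ∀ i, ∑ j ∈ I i, a j = ∑ l ∈ J (Fin.cast h i), b l := by
  induction n generalizing m with
  | zero =>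
    cases m with
    | zero => exact ⟨rfl, finZeroElim, finZeroElim⟩
    | succ m => exact absurd (by simpa using heq.symm) (d₂.sum_smul_ne_zero hP hu hsd)
  | succ n ih =>
    cases m with
    | zero => exact absurd (by simpa using heq) (d₁.sum_smul_ne_zero hP hu hsd)
    | succ m =>
      obtain ⟨hμν, hIJ⟩ := top_eq hP hu hsd d₁ d₂ heq
      have htail : ∑ i : Fin n, μ i.succ • ∑ j ∈ I i.succ, a j
          = ∑ k : Fin m, ν k.succ • ∑ l ∈ J k.succ, b l := by
        rw [Fin.sum_univ_succ, Fin.sum_univ_succ, hμν, hIJ] at heq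
        exact add_left_cancel heq
      obtain ⟨rfl, hμν', hIJ'⟩ := ih d₁.tail d₂.tail htail
      exact ⟨rfl, Fin.cases (by simpa) (by simpa using hμν'),
        Fin.cases (by simpa) (by simpa using hIJ')⟩

end IsCoarseDecomposition

theorem stmt_16_general (P : Set V) (hP : IsCone P) (u : V) (hu : u ∈ P)
    (hsd : SharplyDet P u)
    (n' m' n m : ℕ) (a : Fin n' → V) (b : Fin m' → V)
    (ha : IsContext P u a) (hb : IsContext P u b)
    (I : Fin n → Finset (Fin n')) (J : Fin m → Finset (Fin m'))
    (hIne : ∀ i, (I i).Nonempty)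
    (hIdisj : ∀ i j, i ≠ j → Disjoint (I i) (I j))
    (hJne : ∀ k, (J k).Nonempty)
    (hJdisj : ∀ k l, k ≠ l → Disjoint (J k) (J l))
    (μ : Fin n → ℝ) (ν : Fin m → ℝ)
    (hμpos : ∀ i, 0 < μ i) (hμdec : ∀ i j : Fin n, i < j → μ j < μ i)
    (hνpos : ∀ k, 0 < ν k) (hνdec : ∀ k l : Fin m, k < l → ν l < ν k)
    (heq : ∑ i, μ i • ∑ j ∈ I i, a j = ∑ k, ν k • ∑ l ∈ J k, b l) :
    ∃ h : n = m,
      (∀ i : Fin n, μ i = ν (Fin.cast h i)) ∧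
      (∀ i : Fin n, ∑ j ∈ I i, a j = ∑ l ∈ J (Fin.cast h i), b l) :=
  IsCoarseDecomposition.unique hP hu hsd
    ⟨ha, hIne, fun i j => hIdisj i j, hμpos, fun i j => hμdec i j⟩
    ⟨hb, hJne, fun k l => hJdisj k l, hνpos, fun k l => hνdec k l⟩ heq

/-- Essential uniqueness of spectral decompositions in a spectral effect algebra
with sharply determining state space: if
`∑ᵢ μᵢ (∑_{j ∈ Iᵢ} aⱼ) = ∑ₖ νₖ (∑_{l ∈ Jₖ} b_l)` with strictly decreasing positive
coefficients, then `n = m`, `μᵢ = νᵢ` and `∑_{j ∈ Iᵢ} aⱼ = ∑_{l ∈ Jᵢ} b_l`. -/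
theorem stmt_16 (P : Set V) (hP : IsCone P) (u : V) (hu : u ∈ P)
    (hspec : Spectral P u) (hsd : SharplyDet P u)
    (n' m' n m : ℕ) (a : Fin n' → V) (b : Fin m' → V)
    (ha : IsContext P u a) (hb : IsContext P u b)
    (I : Fin n → Finset (Fin n')) (J : Fin m → Finset (Fin m'))
    (hIne : ∀ i, (I i).Nonempty)
    (hIdisj : ∀ i j, i ≠ j → Disjoint (I i) (I j))
    (hJne : ∀ k, (J k).Nonempty)
    (hJdisj : ∀ k l, k ≠ l → Disjoint (J k) (J l))
    (μ : Fin n → ℝ) (ν : Fin m → ℝ)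
    (hμpos : ∀ i, 0 < μ i) (hμdec : ∀ i j : Fin n, i < j → μ j < μ i)
    (hνpos : ∀ k, 0 < ν k) (hνdec : ∀ k l : Fin m, k < l → ν l < ν k)
    (heq : ∑ i, μ i • ∑ j ∈ I i, a j = ∑ k, ν k • ∑ l ∈ J k, b l) :
    ∃ h : n = m,
      (∀ i : Fin n, μ i = ν (Fin.cast h i)) ∧
      (∀ i : Fin n, ∑ j ∈ I i, a j = ∑ l ∈ J (Fin.cast h i), b l) :=
  stmt_16_general P hP u hu hsd n' m' n m a b ha hb I J hIne hIdisj hJne hJdisj μ ν hμpos hμdec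
    hνpos hνdec heq
end

section
/- Suppose E is spectral and 𝔖(E) is sharply determining. Let f, g ∈ E be sharp and for λ ∈ (0,1) let p_λ denote the smallest sharp element of E larger than λf + (1−λ)g (which exists). Then p_λ does not depend on λ ∈ (0,1), and p := p_{1/2} is the supremum of f and g in the partially ordered set S(E) of sharp elements of E: f ≤ p, g ≤ p, and p ≤ h for every sharp h ∈ E with f ≤ h and g ≤ h. Moreover, u − ((u−f) ∨ (u−g)) is the infimum of f and g in S(E), where ∨ denotes the supremum in S(E). -/
variable {V : Type*} [AddCommGroup V] [Module ℝ V]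

/-- `p` is the smallest sharp element of `[0,u]` above `x`. -/
def SmallestSharpAbove (P : Set V) (u x p : V) : Prop :=
  Sharp P u p ∧ leC P x p ∧ ∀ q, Sharp P u q → leC P x q → leC P p q

section Aux

variable {P : Set V} {u : V}

lemma leC_iff {v w : V} : leC P v w ↔ w - v ∈ P := Iff.rfl

lemma mem_Eff {x : V} : x ∈ Eff P u ↔ x ∈ P ∧ u - x ∈ P := by
  simp [Eff, leC, sub_zero]

lemma P_congr {A B : V} (h : A = B) (hA : A ∈ P) : B ∈ P := h ▸ hA

lemma addP (hP : IsCone P) {x y : V} (hx : x ∈ P) (hy : y ∈ P) : x + y ∈ P :=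
  hP.1 x hx y hy

lemma smulP (hP : IsCone P) {c : ℝ} {x : V} (hc : 0 ≤ c) (hx : x ∈ P) : c • x ∈ P :=
  hP.2.1 c hc x hx

lemma zeroP (hP : IsCone P) (hu : u ∈ P) : (0 : V) ∈ P := by
  simpa using hP.2.1 0 le_rfl u hu

lemma sumP (hP : IsCone P) (hu : u ∈ P) {ι : Type*} {T : Finset ι} {v : ι → V}
    (h : ∀ i ∈ T, v i ∈ P) : (∑ i ∈ T, v i) ∈ P :=
  Finset.sum_induction v (· ∈ P) (fun a b ha hb => hP.1 a ha b hb) (zeroP hP hu) h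

lemma zero_mem_Eff (hP : IsCone P) (hu : u ∈ P) : (0 : V) ∈ Eff P u :=
  mem_Eff.mpr ⟨zeroP hP hu, by simpa using hu⟩

lemma compl_mem {f : V} (hf : f ∈ Eff P u) : u - f ∈ Eff P u := by
  rcases mem_Eff.mp hf with ⟨h1, h2⟩
  exact mem_Eff.mpr ⟨h2, by simpa using h1⟩

lemma compl_sharp {f : V} (hf : Sharp P u f) : Sharp P u (u - f) := by
  refine ⟨compl_mem hf.1, fun g hg h1 h2 => hf.2 g hg ?_ h1⟩
  rwa [show u - (u - f) = f from sub_sub_cancel u f] at h2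

lemma le_of_states (hsd : SharplyDet P u) {f g : V} (hf : Sharp P u f)
    (hg : g ∈ Eff P u) (h : ∀ s : V →ₗ[ℝ] ℝ, IsState P u s → s f = 1 → s g = 1) :
    leC P f g := by
  by_contra hc
  obtain ⟨s, hs, h1, h2⟩ := hsd f hf.1 hf g hg hc
  rw [h s hs h1] at h2
  exact lt_irrefl 1 h2

/-- If `h` is sharp, `y ∈ E`, `μ > 0` and `μ•y + h ≤ u`, then `y + h ≤ u`. -/
lemma orth (hP : IsCone P) (hsd : SharplyDet P u) {h y : V} {μ : ℝ}
    (hh : Sharp P u h) (hy : y ∈ Eff P u) (hμ : 0 < μ)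
    (hle : u - (μ • y + h) ∈ P) : u - (y + h) ∈ P := by
  have key : leC P h (u - y) := by
    apply le_of_states hsd hh (compl_mem hy)
    intro s hs h1
    have e0 : 0 ≤ s u - (μ * s y + s h) := by
      simpa [map_sub, map_add, map_smul, smul_eq_mul] using hs.1 _ hle
    have e1 : 0 ≤ s y := hs.1 _ (mem_Eff.mp hy).1
    have e2 : s y = 0 := by nlinarith [hs.2]
    simp [map_sub, hs.2, h1, e2]
  have : (u - y) - h = u - (y + h) := by abel
  exact P_congr this key

/-- If `p` is sharp, `y ∈ E`, `μ > 0` and `μ•y ≤ p`, then `y ≤ p`. -/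
lemma mult_le (hP : IsCone P) (hsd : SharplyDet P u) {p y : V} {μ : ℝ}
    (hp : Sharp P u p) (hy : y ∈ Eff P u) (hμ : 0 < μ)
    (hle : p - μ • y ∈ P) : p - y ∈ P := by
  have h1 : u - (y + (u - p)) ∈ P := by
    apply orth hP hsd (compl_sharp hp) hy hμ
    exact P_congr (show p - μ • y = u - (μ • y + (u - p)) by abel) hle
  exact P_congr (show u - (y + (u - p)) = p - y by abel) h1

/-- Subset sums of a context are sharp. -/
lemma subsum_sharp (hP : IsCone P) (hu : u ∈ P) (hspec : Spectral P u)
    (hsd : SharplyDet P u) {n : ℕ} {a : Fin n → V} (ha : IsContext P u a)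
    (T : Finset (Fin n)) : Sharp P u (∑ i ∈ T, a i) := by
  have haE : ∀ i, a i ∈ Eff P u := fun i => (ha.1 i).1.1
  have haP : ∀ i, a i ∈ P := fun i => (mem_Eff.mp (haE i)).1
  have hCsum : ∑ i ∈ Finset.univ \ T, a i + ∑ i ∈ T, a i = u := by
    rw [Finset.sum_sdiff (Finset.subset_univ T), ha.2]
  have hcompl : u - ∑ i ∈ T, a i = ∑ i ∈ Finset.univ \ T, a i := by
    rw [← hCsum]; abel
  have hbE : (∑ i ∈ T, a i) ∈ Eff P u := by
    refine mem_Eff.mpr ⟨sumP hP hu (fun i _ => haP i), ?_⟩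
    rw [hcompl]; exact sumP hP hu (fun i _ => haP i)
  refine ⟨hbE, ?_⟩
  intro g hg hgb hgb'
  by_contra hne
  obtain ⟨m, c, ν, hc, hν, hgd⟩ := hspec g hg
  have hcE : ∀ k, c k ∈ Eff P u := fun k => (hc.1 k).1.1
  have hcP : ∀ k, c k ∈ P := fun k => (mem_Eff.mp (hcE k)).1
  have hex : ∃ k, ν k ≠ 0 := by
    by_contra hall
    push_neg at hall
    exact hne (by rw [hgd]; exact Finset.sum_eq_zero fun k _ => by rw [hall k, zero_smul])
  obtain ⟨k, hk⟩ := hex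
  have hkpos : 0 < ν k := (hν k).1.lt_of_ne (Ne.symm hk)
  have hck : Sharp P u (c k) := (hc.1 k).1
  have hckne : c k ≠ 0 := (hc.1 k).2.2.1
  have hnotle : ¬ leC P (c k) 0 := by
    intro hle
    exact hckne (hP.2.2 (c k) (hcP k) (by simpa [leC, zero_sub] using hle))
  obtain ⟨s, hs, hs1, -⟩ := hsd (c k) (hcE k) hck 0 (zero_mem_Eff hP hu) hnotle
  -- every a i is orthogonal to g, hence to c k, hence s (a i) = 0
  have key : ∀ i, s (a i) = 0 := by
    intro i
    have hgi : (u - a i) - g ∈ P := by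
      by_cases hi : i ∈ T
      · have e1 : ∑ j ∈ T.erase i, a j + a i = ∑ j ∈ T, a j := Finset.sum_erase_add T a hi
        have e : (u - a i) - g =
            ((u - ∑ j ∈ T, a j) - g) + ∑ j ∈ T.erase i, a j := by
          rw [← e1]; abel
        rw [e]
        exact addP hP hgb' (sumP hP hu (fun j _ => haP j))
      · have hi' : i ∈ Finset.univ \ T := by simp [hi]
        have e1 : ∑ j ∈ (Finset.univ \ T).erase i, a j + a i
            = ∑ j ∈ Finset.univ \ T, a j := Finset.sum_erase_add _ a hi'
        have e3 : ∑ j ∈ (Finset.univ \ T).erase i, a j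
            = (u - ∑ j ∈ T, a j) - a i := by
          rw [hcompl, ← e1]; abel
        have e : (u - a i) - g =
            ((∑ j ∈ T, a j) - g) + ∑ j ∈ (Finset.univ \ T).erase i, a j := by
          rw [e3]; abel
        rw [e]
        exact addP hP hgb (sumP hP hu (fun j _ => haP j))
    have hck2 : u - (ν k • c k + a i) ∈ P := by
      have e : u - (ν k • c k + a i) =
          ((u - a i) - g) + ∑ j ∈ Finset.univ.erase k, ν j • c j := by
        rw [hgd, ← Finset.sum_erase_add Finset.univ _ (Finset.mem_univ k)]; abel
      rw [e]
      exact addP hP hgi (sumP hP hu (fun j _ => smulP hP (hν j).1 (hcP j)))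
    have horth : u - (c k + a i) ∈ P :=
      orth hP hsd (ha.1 i).1 (hcE k) hkpos hck2
    have h1 : 0 ≤ s u - (s (c k) + s (a i)) := by
      simpa [map_sub, map_add] using hs.1 _ horth
    have h2 : 0 ≤ s (a i) := hs.1 _ (haP i)
    have h3 := hs.2
    linarith [hs1]
  have : (1 : ℝ) = ∑ i, s (a i) := by rw [← hs.2, ← ha.2, map_sum]
  rw [Finset.sum_eq_zero (fun i _ => key i)] at this
  exact one_ne_zero this

/-- Existence of the smallest sharp element above any effect. -/
lemma exists_smallest (hP : IsCone P) (hu : u ∈ P) (hspec : Spectral P u)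
    (hsd : SharplyDet P u) {x : V} (hx : x ∈ Eff P u) :
    ∃ p, SmallestSharpAbove P u x p := by
  classical
  obtain ⟨n, a, μ, ha, hμ, hxd⟩ := hspec x hx
  have haE : ∀ i, a i ∈ Eff P u := fun i => (ha.1 i).1.1
  have haP : ∀ i, a i ∈ P := fun i => (mem_Eff.mp (haE i)).1
  set T : Finset (Fin n) := Finset.univ.filter (fun i => μ i ≠ 0) with hT
  have hxT : x = ∑ i ∈ T, μ i • a i := by
    rw [hxd]
    exact (Finset.sum_subset (Finset.subset_univ T) (fun i _ hi => by
      have : μ i = 0 := by simpa [hT] using hi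
      rw [this, zero_smul])).symm
  have hsharp : Sharp P u (∑ i ∈ T, a i) := subsum_sharp hP hu hspec hsd ha T
  refine ⟨∑ i ∈ T, a i, hsharp, ?_, ?_⟩
  · show (∑ i ∈ T, a i) - x ∈ P
    have e : (∑ i ∈ T, a i) - x = ∑ i ∈ T, (1 - μ i) • a i := by
      rw [hxT, ← Finset.sum_sub_distrib]
      exact Finset.sum_congr rfl fun i _ => by rw [sub_smul, one_smul]
    rw [e]
    exact sumP hP hu fun i _ => smulP hP (by linarith [(hμ i).2]) (haP i)
  · intro q hq hxq
    by_contra hc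
    have hc' : ¬ leC P (u - q) (u - ∑ i ∈ T, a i) := by
      intro hle
      exact hc (P_congr (show (u - ∑ i ∈ T, a i) - (u - q) = q - ∑ i ∈ T, a i by abel) hle)
    obtain ⟨s, hs, hs1, hs2⟩ := hsd (u - q) (compl_mem hq.1) (compl_sharp hq)
      (u - ∑ i ∈ T, a i) (compl_mem hsharp.1) hc'
    have hsu := hs.2
    have hsq : s q = 0 := by
      have : s u - s q = 1 := by simpa [map_sub] using hs1
      linarith
    have hsp : 0 < s (∑ i ∈ T, a i) := by
      have : s u - s (∑ i ∈ T, a i) < 1 := by simpa [map_sub] using hs2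
      linarith
    have hsx0 : s x = 0 := by
      have hle : 0 ≤ s q - s x := by simpa [map_sub] using hs.1 _ hxq
      have hge : 0 ≤ s x := hs.1 _ (mem_Eff.mp hx).1
      linarith
    have hsum : ∑ i ∈ T, μ i * s (a i) = 0 := by
      rw [hxT, map_sum] at hsx0
      simpa [map_smul, smul_eq_mul] using hsx0
    have hterms : ∀ i ∈ T, s (a i) = 0 := by
      intro i hi
      have hnn : ∀ j ∈ T, 0 ≤ μ j * s (a j) :=
        fun j _ => mul_nonneg (hμ j).1 (hs.1 _ (haP j))
      have h0 := (Finset.sum_eq_zero_iff_of_nonneg hnn).mp hsum i hi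
      have hμi : μ i ≠ 0 := by simpa [hT] using hi
      exact (mul_eq_zero.mp h0).resolve_left hμi
    have : s (∑ i ∈ T, a i) = 0 := by
      rw [map_sum]; exact Finset.sum_eq_zero hterms
    linarith

/-- The smallest sharp element above `t•f + (1-t)•g` is the sup of `f` and `g`. -/
lemma claimA (hP : IsCone P) (hsd : SharplyDet P u) {f g p : V} {t : ℝ}
    (hf : Sharp P u f) (hg : Sharp P u g) (ht0 : 0 < t) (ht1 : t < 1)
    (hp : SmallestSharpAbove P u (t • f + (1 - t) • g) p) :
    leC P f p ∧ leC P g p ∧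
      ∀ h, Sharp P u h → leC P f h → leC P g h → leC P p h := by
  obtain ⟨hps, hxp, hmin⟩ := hp
  have hfP : f ∈ P := (mem_Eff.mp hf.1).1
  have hgP : g ∈ P := (mem_Eff.mp hg.1).1
  refine ⟨?_, ?_, ?_⟩
  · show p - f ∈ P
    apply mult_le hP hsd hps hf.1 ht0
    have e : p - t • f = (p - (t • f + (1 - t) • g)) + (1 - t) • g := by abel
    rw [e]
    exact addP hP hxp (smulP hP (by linarith) hgP)
  · show p - g ∈ P
    apply mult_le hP hsd hps hg.1 (by linarith : (0:ℝ) < 1 - t)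
    have e : p - (1 - t) • g = (p - (t • f + (1 - t) • g)) + t • f := by abel
    rw [e]
    exact addP hP hxp (smulP hP ht0.le hfP)
  · intro h hh h1 h2
    apply hmin h hh
    show h - (t • f + (1 - t) • g) ∈ P
    have e : h - (t • f + (1 - t) • g) = t • (h - f) + (1 - t) • (h - g) := by
      module
    rw [e]
    exact addP hP (smulP hP ht0.le h1) (smulP hP (by linarith) h2)

end Aux

/-- For sharp `f, g` in a spectral effect algebra with sharply determining state
space: `p_λ := (λf + (1-λ)g)⁰` exists, does not depend on `λ ∈ (0,1)`,
`p := p_{1/2}` is the supremum of `f` and `g` among sharp elements, and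
`u - ((u-f) ∨ (u-g))` is their infimum among sharp elements. -/
theorem stmt_17 (P : Set V) (hP : IsCone P) (u : V) (hu : u ∈ P)
    (hspec : Spectral P u) (hsd : SharplyDet P u)
    (f g : V) (hf : Sharp P u f) (hg : Sharp P u g) :
    -- existence of `p_λ`
    (∀ t : ℝ, 0 < t → t < 1 →
      ∃ p, SmallestSharpAbove P u (t • f + (1 - t) • g) p) ∧
    -- independence of `λ ∈ (0,1)`
    (∀ t₁ t₂ : ℝ, 0 < t₁ → t₁ < 1 → 0 < t₂ → t₂ < 1 → ∀ p q,
      SmallestSharpAbove P u (t₁ • f + (1 - t₁) • g) p →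
      SmallestSharpAbove P u (t₂ • f + (1 - t₂) • g) q → p = q) ∧
    -- `p = p_{1/2}` is the supremum of `f` and `g` in `S(E)`
    (∀ p, SmallestSharpAbove P u ((1/2 : ℝ) • f + (1 - (1/2 : ℝ)) • g) p →
      leC P f p ∧ leC P g p ∧
        ∀ h, Sharp P u h → leC P f h → leC P g h → leC P p h) ∧
    -- `u - ((u-f) ∨ (u-g))` is the infimum of `f` and `g` in `S(E)`
    (∀ q, SmallestSharpAbove P u
        ((1/2 : ℝ) • (u - f) + (1 - (1/2 : ℝ)) • (u - g)) q →
      Sharp P u (u - q) ∧ leC P (u - q) f ∧ leC P (u - q) g ∧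
        ∀ h, Sharp P u h → leC P h f → leC P h g → leC P h (u - q)) := by
  
  have hfP : f ∈ P := (mem_Eff.mp hf.1).1
  have hgP : g ∈ P := (mem_Eff.mp hg.1).1
  have hfP' : u - f ∈ P := (mem_Eff.mp hf.1).2
  have hgP' : u - g ∈ P := (mem_Eff.mp hg.1).2
  have hmemE : ∀ t : ℝ, 0 ≤ t → t ≤ 1 → (t • f + (1 - t) • g) ∈ Eff P u := by
    intro t h0 h1
    refine mem_Eff.mpr ⟨addP hP (smulP hP h0 hfP) (smulP hP (by linarith) hgP), ?_⟩
    have e : u - (t • f + (1 - t) • g) = t • (u - f) + (1 - t) • (u - g) := by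
      module
    rw [e]
    exact addP hP (smulP hP h0 hfP') (smulP hP (by linarith) hgP')
  refine ⟨?_, ?_, ?_, ?_⟩
  · intro t h0 h1
    exact exists_smallest hP hu hspec hsd (hmemE t h0.le h1.le)
  · intro t₁ t₂ h10 h11 h20 h21 p q hp hq
    obtain ⟨hfp, hgp, hup⟩ := claimA hP hsd hf hg h10 h11 hp
    obtain ⟨hfq, hgq, huq⟩ := claimA hP hsd hf hg h20 h21 hq
    have hpq : leC P p q := hup q hq.1 hfq hgq
    have hqp : leC P q p := huq p hp.1 hfp hgp
    have hz : q - p = 0 := by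
      refine hP.2.2 _ hpq ?_
      exact P_congr (show p - q = -(q - p) by abel) hqp
    exact (sub_eq_zero.mp hz).symm
  · intro p hp
    exact claimA hP hsd hf hg (by norm_num) (by norm_num) hp
  · intro q hq
    have hf' : Sharp P u (u - f) := compl_sharp hf
    have hg' : Sharp P u (u - g) := compl_sharp hg
    obtain ⟨h1, h2, h3⟩ := claimA hP hsd hf' hg' (by norm_num) (by norm_num) hq
    refine ⟨compl_sharp hq.1, ?_, ?_, ?_⟩
    · exact P_congr (show q - (u - f) = f - (u - q) by abel) h1
    · exact P_congr (show q - (u - g) = g - (u - q) by abel) h2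
    · intro h hh hhf hhg
      have hqh : leC P q (u - h) :=
        h3 (u - h) (compl_sharp hh)
          (P_congr (show f - h = (u - h) - (u - f) by abel) hhf)
          (P_congr (show g - h = (u - h) - (u - g) by abel) hhg)
      exact P_congr (show (u - h) - q = (u - q) - h by abel) hqh
end
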